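/- Let G be a strong quasi-n-partite graph and I(G) ⊂ T its edge ideal. Then I(G)̄ = Σ I_{1l_1} I_{2l_2} ⋯ I_{nl_n}, where the sum is over all tuples (l_1,…,l_n) of nonnegative integers with l_1 + … + l_n = 2, and I_{il} = (x_{i1},…,x_{im_i})^l is the l-th power of the ideal generated by the variables of the i-th block. Equivalently, I(G)̄ is the ideal generated by all monomials of degree 2 in the variables of T, i.e., the square of the maximal graded ideal (x_{11},…,x_{nm_n}). -/

import Mathlib

open MvPolynomial

/-- `f` is integral over the ideal `I`: it satisfies an equation
`f^k + c₁ f^(k-1) + ⋯ + c_k = 0` with `c_j ∈ I^j`. -/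
def Ideal.IsIntegralElemOver {R : Type*} [CommRing R] (I : Ideal R) (f : R) : Prop :=
  ∃ k : ℕ, 0 < k ∧ ∃ c : ℕ → R, (∀ j, 1 ≤ j → j ≤ k → c j ∈ I ^ j) ∧
    f ^ k + ∑ j ∈ Finset.Icc 1 k, c j * f ^ (k - j) = 0

/-- The integral closure of an ideal `I`, the ideal of all elements integral over `I`. -/
def Ideal.intClosure {R : Type*} [CommRing R] (I : Ideal R) : Ideal R :=
  Ideal.span {f | I.IsIntegralElemOver f}

/-- The edge ideal of the strong quasi-`n`-partite graph: the complete `n`-partite graph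
on `V₁ ∪ ⋯ ∪ Vₙ`, `Vᵢ = {x_{i1}, …, x_{im_i}}`, with a loop at every vertex; it is
generated by the `x_{ih} x_{i'h'}` with `i ≠ i'` and the `x_{ih}²`. -/
noncomputable def edgeIdealSQ (K : Type*) [Field K] (n : ℕ) (m : Fin n → ℕ) :
    Ideal (MvPolynomial (Σ i : Fin n, Fin (m i)) K) :=
  Ideal.span
    ({f | ∃ (i i' : Fin n) (h : Fin (m i)) (h' : Fin (m i')),
        i ≠ i' ∧ f = X ⟨i, h⟩ * X ⟨i', h'⟩} ∪
     {f | ∃ (i : Fin n) (h : Fin (m i)), f = X ⟨i, h⟩ ^ 2})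

/-! Every generator of `I(G)` is a product of two variables, so `I(G) ⊆ 𝔪²` for the maximal
graded ideal `𝔪`, while `(x_a x_b)² = x_a² x_b² ∈ I(G)²` gives `𝔪² ⊆ I(G)̄`. It remains to see
that `𝔪²` is integrally closed. If `f` is integral over `𝔪²`, then sending every variable to a
single variable `t`, or `x_a` to `t` and all other variables to `0`, makes the image of `f`
integral over `(t²)`, hence divisible by `t²` as `t` is prime; so the constant and the linear
coefficients of `f` vanish. The block description is the multinomial expansion of
`𝔪² = (𝔪₁ + ⋯ + 𝔪ₙ)²`, whose coefficients disappear because addition of ideals is idempotent. -/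

namespace Ideal

variable {R : Type*} [CommRing R]

theorem IsIntegralElemOver.mono {I J : Ideal R} (hIJ : I ≤ J) {f : R}
    (hf : I.IsIntegralElemOver f) : J.IsIntegralElemOver f := by
  obtain ⟨k, hk, c, hc, heq⟩ := hf
  exact ⟨k, hk, c, fun j hj₁ hj₂ => Ideal.pow_right_mono hIJ j (hc j hj₁ hj₂), heq⟩

theorem IsIntegralElemOver.map {S : Type*} [CommRing S] (φ : R →+* S) {I : Ideal R} {f : R}
    (hf : I.IsIntegralElemOver f) : (I.map φ).IsIntegralElemOver (φ f) := by
  obtain ⟨k, hk, c, hc, heq⟩ := hf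
  refine ⟨k, hk, φ ∘ c, fun j hj₁ hj₂ => ?_, ?_⟩
  · rw [← Ideal.map_pow]
    exact Ideal.mem_map_of_mem φ (hc j hj₁ hj₂)
  · simpa using congrArg φ heq

theorem isIntegralElemOver_of_pow_mem_pow {I : Ideal R} {f : R} {k : ℕ} (hk : 0 < k)
    (hf : f ^ k ∈ I ^ k) : I.IsIntegralElemOver f := by
  classical
  refine ⟨k, hk, fun j => if j = k then -f ^ k else 0, fun j _ _ => ?_, ?_⟩
  · dsimp only
    split_ifs with hj
    · exact neg_mem (hj ▸ hf)
    · exact zero_mem _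
  · simp [ite_mul, Finset.sum_ite_eq', Nat.one_le_of_lt hk]

theorem iSup_prod_pow_eq_sum_pow {ι : Type*} [Fintype ι] (J : ι → Ideal R) (n : ℕ) :
    ⨆ l : {l : ι → ℕ // ∑ i, l i = n}, ∏ i, J i ^ l.1 i = (∑ i, J i) ^ n := by
  classical
  rw [Finset.sum_pow_eq_sum_piAntidiag, Ideal.sum_eq_sup, Finset.sup_eq_iSup]
  simp_rw [natCast_eq_one (Nat.multinomial_pos _ _).ne', one_mul, Finset.mem_piAntidiag,
    Finset.mem_univ, implies_true, and_true, iSup_subtype']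

end Ideal

theorem Prime.sq_dvd_of_isIntegralElemOver {R : Type*} [CommRing R] [IsDomain R] {p g : R}
    (hp : Prime p) (hg : (Ideal.span {p ^ 2}).IsIntegralElemOver g) : p ^ 2 ∣ g := by
  obtain ⟨k, hk, c, hc, heq⟩ := hg
  have hc : ∀ j ∈ Finset.Icc 1 k, p ^ (2 * j) ∣ c j := fun j hj => by
    rw [Finset.mem_Icc] at hj
    simpa [Ideal.span_singleton_pow, ← pow_mul, Ideal.mem_span_singleton] using hc j hj.1 hj.2
  have hgk : g ^ k = -∑ j ∈ Finset.Icc 1 k, c j * g ^ (k - j) := eq_neg_of_add_eq_zero_left heq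
  obtain ⟨u, rfl⟩ : p ∣ g := by
    refine hp.dvd_of_dvd_pow (n := k) ?_
    rw [hgk, dvd_neg]
    refine Finset.dvd_sum fun j hj => dvd_mul_of_dvd_left ?_ _
    exact (dvd_pow_self p (by grind)).trans (hc j hj)
  -- each term `c j * (p u) ^ (k - j)` is divisible by `p ^ (2 j + k - j)`, hence by `p ^ (k + 1)`
  have hsum : p ^ (k + 1) ∣ ∑ j ∈ Finset.Icc 1 k, c j * (p * u) ^ (k - j) := by
    refine Finset.dvd_sum fun j hj => ?_
    have := mul_dvd_mul (hc j hj) (pow_dvd_pow_of_dvd (dvd_mul_right p u) (k - j))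
    rw [← pow_add] at this
    exact (pow_dvd_pow p (by grind)).trans this
  rw [← dvd_neg, ← hgk, mul_pow, pow_succ, mul_dvd_mul_iff_left (pow_ne_zero k hp.ne_zero)] at hsum
  obtain ⟨v, rfl⟩ := hp.dvd_of_dvd_pow hsum
  exact ⟨v, by ring⟩

theorem Finsupp.exists_single_one_le {σ : Type*} {d : σ →₀ ℕ} (hd : d ≠ 0) :
    ∃ a, single a 1 ≤ d := by
  obtain ⟨a, ha⟩ := Finsupp.ne_iff.mp hd
  exact ⟨a, single_le_iff.mpr (Nat.one_le_iff_ne_zero.mpr ha)⟩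

namespace MvPolynomial

open Finsupp

variable {R σ : Type*} [CommRing R]

theorem monomial_mem_span_X_sq {d : σ →₀ ℕ} (hd₀ : d ≠ 0) (hd₁ : ∀ a, d ≠ single a 1) (r : R) :
    monomial d r ∈ Ideal.span (Set.range (X : σ → MvPolynomial σ R)) ^ 2 := by
  obtain ⟨a, ha⟩ := exists_single_one_le hd₀
  obtain ⟨b, hb⟩ := exists_single_one_le (d := d - single a 1) fun h =>
    hd₁ a (le_antisymm (tsub_eq_zero_iff_le.mp h) ha)
  have hd : d = single a 1 + single b 1 + (d - single a 1 - single b 1) := by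
    rw [add_assoc, add_tsub_cancel_of_le hb, add_tsub_cancel_of_le ha]
  have hmon : monomial d r = X a * X b * monomial (d - single a 1 - single b 1) r := by
    nth_rewrite 1 [hd]
    rw [X, X, monomial_mul, monomial_mul, one_mul, one_mul]
  rw [hmon, pow_two]
  exact Ideal.mul_mem_right _ _
    (Ideal.mul_mem_mul (Ideal.subset_span ⟨a, rfl⟩) (Ideal.subset_span ⟨b, rfl⟩))

theorem mem_span_X_sq_of_coeff_eq_zero {f : MvPolynomial σ R} (h₀ : coeff 0 f = 0)
    (h₁ : ∀ a, coeff (single a 1) f = 0) :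
    f ∈ Ideal.span (Set.range (X : σ → MvPolynomial σ R)) ^ 2 := by
  rw [← support_sum_monomial_coeff f]
  refine Ideal.sum_mem _ fun d hd => monomial_mem_span_X_sq ?_ ?_ _
  · rintro rfl
    exact mem_support_iff.mp hd h₀
  · rintro a rfl
    exact mem_support_iff.mp hd (h₁ a)

theorem coeff_single_eq_zero_of_X_pow_dvd {i : σ} {n e : ℕ} (he : e < n) {g : MvPolynomial σ R}
    (hg : X i ^ n ∣ g) : coeff (single i e) g = 0 := by
  classical
  obtain ⟨q, rfl⟩ := hg
  rw [X_pow_eq_monomial, coeff_monomial_mul', if_neg]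
  simpa [single_le_iff] using he

theorem mem_span_X_sq_of_isIntegralElemOver [IsDomain R] {f : MvPolynomial σ R}
    (hf : (Ideal.span (Set.range X) ^ 2).IsIntegralElemOver f) :
    f ∈ Ideal.span (Set.range (X : σ → MvPolynomial σ R)) ^ 2 := by
  have hdvd (φ : MvPolynomial σ R →ₐ[R] MvPolynomial Unit R)
      (hφ : ∀ a, φ (X a) ∈ Ideal.span {X ()}) : X () ^ 2 ∣ φ f := by
    refine X_prime.sq_dvd_of_isIntegralElemOver ((hf.map φ.toRingHom).mono ?_)
    rw [Ideal.map_pow, ← Ideal.span_singleton_pow, Ideal.map_span]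
    refine Ideal.pow_right_mono (Ideal.span_le.mpr ?_) 2
    rintro _ ⟨_, ⟨a, rfl⟩, rfl⟩
    exact hφ a
  apply mem_span_X_sq_of_coeff_eq_zero
  · have := coeff_single_eq_zero_of_X_pow_dvd two_pos <|
      hdvd (rename fun _ => ()) fun a => by simp
    rwa [single_zero, ← constantCoeff_eq, constantCoeff_rename, constantCoeff_eq] at this
  · intro a
    have hinj : Function.Injective fun _ : Unit => a := fun _ _ _ => rfl
    have := coeff_single_eq_zero_of_X_pow_dvd one_lt_two <|
      hdvd (killCompl hinj) fun b => by by_cases h : b = a <;> simp [killCompl, h]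
    simpa [coeff_killCompl, mapDomain_single] using this

theorem sum_span_X_sigma {ι : Type*} [Fintype ι] {κ : ι → Type*} :
    ∑ i, Ideal.span {f : MvPolynomial (Σ i, κ i) R | ∃ h, f = X ⟨i, h⟩} =
      Ideal.span (Set.range X) := by
  rw [Ideal.sum_eq_sup, Finset.sup_univ_eq_iSup, ← Ideal.span_iUnion]
  congr
  ext f
  simp [eq_comm]

end MvPolynomial

section EdgeIdeal

open Pointwise

variable {K : Type*} [Field K] {n : ℕ} {m : Fin n → ℕ}

theorem X_sq_mem_edgeIdealSQ (a : Σ i : Fin n, Fin (m i)) : X a ^ 2 ∈ edgeIdealSQ K n m :=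
  Ideal.subset_span (Set.mem_union_right _ ⟨a.1, a.2, rfl⟩)

theorem edgeIdealSQ_le_span_X_sq :
    edgeIdealSQ K n m ≤ Ideal.span (Set.range X) ^ 2 := by
  refine Ideal.span_le.mpr ?_
  rintro _ (⟨i, i', h, h', -, rfl⟩ | ⟨i, h, rfl⟩)
  · rw [SetLike.mem_coe, pow_two]
    exact Ideal.mul_mem_mul (Ideal.subset_span ⟨_, rfl⟩) (Ideal.subset_span ⟨_, rfl⟩)
  · exact Ideal.pow_mem_pow (Ideal.subset_span (Set.mem_range_self _)) 2

theorem span_X_sq_le_intClosure_edgeIdealSQ :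
    Ideal.span (Set.range X) ^ 2 ≤ (edgeIdealSQ K n m).intClosure := by
  rw [pow_two, Ideal.span_mul_span', Ideal.intClosure]
  refine Ideal.span_mono ?_
  rintro _ ⟨_, ⟨a, rfl⟩, _, ⟨b, rfl⟩, rfl⟩
  refine Ideal.isIntegralElemOver_of_pow_mem_pow two_pos ?_
  rw [mul_pow, pow_two (edgeIdealSQ K n m)]
  exact Ideal.mul_mem_mul (X_sq_mem_edgeIdealSQ a) (X_sq_mem_edgeIdealSQ b)

theorem intClosure_edgeIdealSQ :
    (edgeIdealSQ K n m).intClosure = Ideal.span (Set.range X) ^ 2 := by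
  refine le_antisymm (Ideal.span_le.mpr fun f hf => ?_) span_X_sq_le_intClosure_edgeIdealSQ
  exact MvPolynomial.mem_span_X_sq_of_isIntegralElemOver (hf.mono edgeIdealSQ_le_span_X_sq)

end EdgeIdeal

theorem stmt5_general {K : Type*} [Field K] (n : ℕ) (m : Fin n → ℕ) :
    (edgeIdealSQ K n m).intClosure =
      (⨆ l : {l : Fin n → ℕ // ∑ i, l i = 2},
        ∏ i : Fin n,
          (Ideal.span {f : MvPolynomial (Σ i : Fin n, Fin (m i)) K |
            ∃ h : Fin (m i), f = X ⟨i, h⟩}) ^ (l.1 i)) ∧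
    (edgeIdealSQ K n m).intClosure =
      (Ideal.span (Set.range (X : (Σ i : Fin n, Fin (m i)) →
        MvPolynomial (Σ i : Fin n, Fin (m i)) K))) ^ 2 := by
  rw [Ideal.iSup_prod_pow_eq_sum_pow, MvPolynomial.sum_span_X_sigma, and_self]
  exact intClosure_edgeIdealSQ

/-- For a strong quasi-`n`-partite graph `G`,
`I(G)̄ = Σ_{l₁+⋯+lₙ=2} I_{1l₁} ⋯ I_{nlₙ}` where `I_{il} = (x_{i1}, …, x_{im_i})^l`;
equivalently, `I(G)̄` is the square of the maximal graded ideal `(x_{11}, …, x_{nm_n})`. -/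
theorem stmt5 {K : Type*} [Field K] (n : ℕ) (hn : 1 ≤ n) (m : Fin n → ℕ)
    (hm : ∀ i, 1 ≤ m i) :
    (edgeIdealSQ K n m).intClosure =
      (⨆ l : {l : Fin n → ℕ // ∑ i, l i = 2},
        ∏ i : Fin n,
          (Ideal.span {f : MvPolynomial (Σ i : Fin n, Fin (m i)) K |
            ∃ h : Fin (m i), f = X ⟨i, h⟩}) ^ (l.1 i)) ∧
    (edgeIdealSQ K n m).intClosure =
      (Ideal.span (Set.range (X : (Σ i : Fin n, Fin (m i)) →
        MvPolynomial (Σ i : Fin n, Fin (m i)) K))) ^ 2 :=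
  stmt5_general n m
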